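/- arXiv:2402.14483 — 2 statements merged into one kernel-verified Lean document; each statement's English description precedes it below -/
import Mathlib

section
/- Let P ∈ ℝ^{n×n} be a symmetric matrix solving the algebraic Riccati equation AᵀP + PA − PBR⁻¹BᵀP + Q = 0, and let K⋆ = −R⁻¹BᵀP. Let x : ℝ → ℝⁿ be differentiable with x'(t) = (A + BK⋆) x(t) for all t ≥ 0 (i.e., the plant in closed loop with the optimal policy u(t) = K⋆x(t)), and suppose x(t) → 0 as t → ∞. Then the improper integral ∫₀^∞ (x(t)ᵀ Q x(t) + (K⋆x(t))ᵀ R (K⋆x(t))) dt converges and equals x(0)ᵀ P x(0) (the optimal cost equals the quadratic value function x₀ᵀPx₀). -/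
/-!
With the gain `K = -R⁻¹BᵀP`, the Riccati equation becomes the closed-loop Lyapunov equation
`(A + BK)ᵀP + P(A + BK) = -(Q + KᵀRK)`, so along the closed-loop trajectory
`d/dt (xᵀPx) = -(xᵀQx + (Kx)ᵀR(Kx))`. Hence the cost over `[0, T]` is `x(0)ᵀPx(0) - x(T)ᵀPx(T)`,
and the second term vanishes as `x(T) → 0`.
-/

open Matrix Filter Topology

section Calculus

variable {𝕜 ι : Type*} [NontriviallyNormedField 𝕜] [Fintype ι]
  {u v : 𝕜 → ι → 𝕜} {u' v' : ι → 𝕜} {t : 𝕜}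

theorem HasDerivAt.dotProduct (hu : HasDerivAt u u' t) (hv : HasDerivAt v v' t) :
    HasDerivAt (fun s => u s ⬝ᵥ v s) (u' ⬝ᵥ v t + u t ⬝ᵥ v') t := by
  rw [_root_.dotProduct, _root_.dotProduct, ← Finset.sum_add_distrib]
  exact HasDerivAt.fun_sum fun i _ => (hasDerivAt_pi.mp hu i).fun_mul (hasDerivAt_pi.mp hv i)

theorem HasDerivAt.mulVec {κ : Type*} (M : Matrix κ ι 𝕜) (hv : HasDerivAt v v' t) :
    HasDerivAt (fun s => M *ᵥ v s) (M *ᵥ v') t :=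
  hasDerivAt_pi.mpr fun i =>
    HasDerivAt.fun_sum fun j _ => (hasDerivAt_pi.mp hv j).const_mul (M i j)

end Calculus

section Algebra

variable {ι κ α : Type*} [Fintype ι] [Fintype κ]

theorem Matrix.mulVec_dotProduct_mulVec [CommSemiring α] (K : Matrix κ ι α) (R : Matrix κ κ α)
    (v : ι → α) : K *ᵥ v ⬝ᵥ R *ᵥ (K *ᵥ v) = v ⬝ᵥ (Kᵀ * R * K) *ᵥ v := by
  rw [← mulVec_mulVec, ← mulVec_mulVec, dotProduct_mulVec v, vecMul_transpose]

theorem lyapunov_closedLoop_of_riccati [CommRing α] [DecidableEq κ]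
    {A P Q : Matrix ι ι α} {B : Matrix ι κ α} {R : Matrix κ κ α} {K : Matrix κ ι α}
    (hR : IsUnit R.det) (hRT : Rᵀ = R) (hP : Pᵀ = P)
    (hARE : Aᵀ * P + P * A - P * B * R⁻¹ * Bᵀ * P + Q = 0) (hK : K = -(R⁻¹ * Bᵀ * P)) :
    (A + B * K)ᵀ * P + P * (A + B * K) = -(Q + Kᵀ * R * K) := by
  have hKT : Kᵀ = -(P * B * R⁻¹) := by
    simp [hK, transpose_mul, transpose_nonsing_inv, hRT, hP, Matrix.mul_assoc]
  have hKRK : Kᵀ * R * K = P * B * R⁻¹ * Bᵀ * P := by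
    rw [hKT, hK, Matrix.neg_mul, Matrix.neg_mul, Matrix.mul_neg, neg_neg,
      Matrix.mul_assoc (P * B) R⁻¹ R, nonsing_inv_mul R hR, Matrix.mul_one]
    simp only [Matrix.mul_assoc]
  rw [← sub_eq_zero, hKRK, transpose_add, transpose_mul, hKT, hK, ← hARE]
  simp only [Matrix.add_mul, Matrix.mul_add, Matrix.neg_mul, Matrix.mul_neg, Matrix.mul_assoc]
  abel

end Algebra

section Lyapunov

variable {ι : Type*} [Fintype ι] {S P W : Matrix ι ι ℝ} {x : ℝ → ι → ℝ}

theorem integral_dotProduct_mulVec_of_lyapunov (hSPW : Sᵀ * P + P * S = -W)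
    (hx : ∀ t, 0 ≤ t → HasDerivAt x (S *ᵥ x t) t) {T : ℝ} (hT : 0 ≤ T) :
    ∫ t in (0 : ℝ)..T, x t ⬝ᵥ W *ᵥ x t = x 0 ⬝ᵥ P *ᵥ x 0 - x T ⬝ᵥ P *ᵥ x T := by
  have hxc : ContinuousOn x (Set.uIcc 0 T) := fun t ht =>
    (hx t (Set.uIcc_of_le hT ▸ ht).1).continuousAt.continuousWithinAt
  have hderiv : ∀ t ∈ Set.uIcc 0 T,
      HasDerivAt (fun s => -(x s ⬝ᵥ P *ᵥ x s)) (x t ⬝ᵥ W *ᵥ x t) t := by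
    intro t ht
    have hxt := hx t (Set.uIcc_of_le hT ▸ ht).1
    have hW : -(S *ᵥ x t ⬝ᵥ P *ᵥ x t + x t ⬝ᵥ P *ᵥ S *ᵥ x t) = x t ⬝ᵥ W *ᵥ x t := by
      rw [mulVec_mulVec _ P, ← vecMul_transpose, ← dotProduct_mulVec, mulVec_mulVec,
        ← dotProduct_add, ← add_mulVec, hSPW, neg_mulVec, dotProduct_neg, neg_neg]
    exact hW ▸ (hxt.dotProduct (hxt.mulVec P)).neg
  have hcont : ContinuousOn (fun t => x t ⬝ᵥ W *ᵥ x t) (Set.uIcc 0 T) :=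
    (by fun_prop : Continuous fun v : ι → ℝ => v ⬝ᵥ W *ᵥ v).comp_continuousOn hxc
  rw [intervalIntegral.integral_eq_sub_of_hasDerivAt hderiv hcont.intervalIntegrable]
  ring

theorem tendsto_integral_dotProduct_mulVec_of_lyapunov (hSPW : Sᵀ * P + P * S = -W)
    (hx : ∀ t, 0 ≤ t → HasDerivAt x (S *ᵥ x t) t) (hx0 : Tendsto x atTop (𝓝 0)) :
    Tendsto (fun T => ∫ t in (0 : ℝ)..T, x t ⬝ᵥ W *ᵥ x t) atTop (𝓝 (x 0 ⬝ᵥ P *ᵥ x 0)) := by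
  have hV : Tendsto (fun T => x T ⬝ᵥ P *ᵥ x T) atTop (𝓝 0) :=
    ((by fun_prop : Continuous fun v : ι → ℝ => v ⬝ᵥ P *ᵥ v).tendsto' 0 0 (by simp)).comp hx0
  have hlim : Tendsto (fun T => x 0 ⬝ᵥ P *ᵥ x 0 - x T ⬝ᵥ P *ᵥ x T) atTop
      (𝓝 (x 0 ⬝ᵥ P *ᵥ x 0)) := by
    simpa using tendsto_const_nhds.sub hV
  refine hlim.congr' ?_
  filter_upwards [eventually_ge_atTop 0] with T hT
  exact (integral_dotProduct_mulVec_of_lyapunov hSPW hx hT).symm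

end Lyapunov

theorem lqr_optimal_cost_eq_value_general {n m : ℕ}
    (A : Matrix (Fin n) (Fin n) ℝ) (B : Matrix (Fin n) (Fin m) ℝ)
    (Q : Matrix (Fin n) (Fin n) ℝ) (R : Matrix (Fin m) (Fin m) ℝ)
    (P : Matrix (Fin n) (Fin n) ℝ)
    (hR : R.PosDef) (hP : P.IsSymm)
    (hARE : Aᵀ * P + P * A - P * B * R⁻¹ * Bᵀ * P + Q = 0)
    (K : Matrix (Fin m) (Fin n) ℝ) (hK : K = -(R⁻¹ * Bᵀ * P))
    (x : ℝ → Fin n → ℝ)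
    (hx : ∀ t, 0 ≤ t → HasDerivAt x ((A + B * K) *ᵥ x t) t)
    (hx0 : Tendsto x atTop (nhds 0)) :
    Tendsto (fun T => ∫ t in (0:ℝ)..T,
        (x t ⬝ᵥ Q *ᵥ x t + (K *ᵥ x t) ⬝ᵥ R *ᵥ (K *ᵥ x t)))
      atTop (nhds (x 0 ⬝ᵥ P *ᵥ x 0)) := by
  have hlyap :=
    lyapunov_closedLoop_of_riccati hR.det_pos.ne'.isUnit hR.isHermitian.eq hP.eq hARE hK
  simpa only [mulVec_dotProduct_mulVec, add_mulVec, dotProduct_add] using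
    tendsto_integral_dotProduct_mulVec_of_lyapunov hlyap hx hx0

/-- in closed loop with the optimal policy `u = K⋆x`, `K⋆ = −R⁻¹BᵀP`,
with `P` a symmetric solution of the ARE and `x(t) → 0`, the improper LQR cost
integral converges and equals `x(0)ᵀ P x(0)`. -/
theorem lqr_optimal_cost_eq_value {n m : ℕ}
    (A : Matrix (Fin n) (Fin n) ℝ) (B : Matrix (Fin n) (Fin m) ℝ)
    (Q : Matrix (Fin n) (Fin n) ℝ) (R : Matrix (Fin m) (Fin m) ℝ)
    (P : Matrix (Fin n) (Fin n) ℝ)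
    (hQ : Q.PosSemidef) (hR : R.PosDef) (hP : P.IsSymm)
    (hARE : Aᵀ * P + P * A - P * B * R⁻¹ * Bᵀ * P + Q = 0)
    (K : Matrix (Fin m) (Fin n) ℝ) (hK : K = -(R⁻¹ * Bᵀ * P))
    (x : ℝ → Fin n → ℝ)
    (hx : ∀ t, 0 ≤ t → HasDerivAt x ((A + B * K) *ᵥ x t) t)
    (hx0 : Tendsto x atTop (nhds 0)) :
    Tendsto (fun T => ∫ t in (0:ℝ)..T,
        (x t ⬝ᵥ Q *ᵥ x t + (K *ᵥ x t) ⬝ᵥ R *ᵥ (K *ᵥ x t)))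
      atTop (nhds (x 0 ⬝ᵥ P *ᵥ x 0)) :=
  lqr_optimal_cost_eq_value_general A B Q R P hR hP hARE K hK x hx hx0
end

section
/- Let B ∈ ℝ^{n×m} and μ > 0. Let P : ℝ → ℝ^{n×n} be differentiable with P(t) symmetric for all t, and let A_cl : ℝ → ℝ^{n×n} and Q̄ : ℝ → ℝ^{n×n} satisfy the time-varying Lyapunov equation A_cl(t)ᵀ P(t) + P(t) A_cl(t) = −Q̄(t) for all t. Let x : ℝ → ℝⁿ be any function and let e : ℝ → ℝⁿ, K̃ : ℝ → ℝ^{m×n} be differentiable with e'(t) = A_cl(t) e(t) + B K̃(t) x(t) and K̃'(t) = −μ Bᵀ P(t) e(t) x(t)ᵀ. Then the function V(t) := e(t)ᵀ P(t) e(t) + μ⁻¹ ‖K̃(t)‖_F² is differentiable with V'(t) = −e(t)ᵀ (Q̄(t) − P'(t)) e(t) for all t. -/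
open Matrix

attribute [local instance] Matrix.normedAddCommGroup Matrix.normedSpace

/-- Squared Frobenius norm of a real matrix. -/
noncomputable def frobSq {p q : ℕ} (M : Matrix (Fin p) (Fin q) ℝ) : ℝ :=
  ∑ i, ∑ j, (M i j) ^ 2

/-! Differentiating `V = eᵀPe + μ⁻¹‖K̃‖_F²` by the product rule, the term `2 eᵀPBK̃x` coming from
the error dynamics is cancelled exactly by the adaptive law, whose contribution is
`μ⁻¹ · 2⟨K̃, K̃'⟩_F = -2 (BᵀPe)ᵀK̃x` since `K̃'` is a rank-one matrix. What remains is
`eᵀṖe + 2 eᵀPA_cl e`, and the Lyapunov equation turns `2 eᵀPA_cl e` into `-eᵀQ̄e`. -/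

namespace Matrix

variable {ι κ α : Type*} [Fintype ι] [Fintype κ]

theorem dotProduct_mulVec_eq_sum [CommSemiring α] (u : ι → α) (M : Matrix ι κ α) (w : κ → α) :
    u ⬝ᵥ M *ᵥ w = ∑ i, ∑ j, u i * M i j * w j := by
  simp only [dotProduct, mulVec, Finset.mul_sum, mul_assoc]

theorem sum_mul_vecMulVec [CommSemiring α] (K : Matrix ι κ α) (u : ι → α) (v : κ → α) :
    ∑ i, ∑ j, K i j * vecMulVec u v i j = u ⬝ᵥ K *ᵥ v := by
  rw [dotProduct_mulVec_eq_sum]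
  simp only [vecMulVec_apply]
  exact Finset.sum_congr rfl fun i _ => Finset.sum_congr rfl fun j _ => by ring

theorem transpose_mulVec_dotProduct [CommSemiring α] (A : Matrix ι κ α) (u : ι → α)
    (v : κ → α) : Aᵀ *ᵥ u ⬝ᵥ v = u ⬝ᵥ A *ᵥ v := by
  rw [mulVec_transpose, ← dotProduct_mulVec]

theorem IsSymm.mulVec_dotProduct [CommSemiring α] {P : Matrix ι ι α} (hP : P.IsSymm)
    (u v : ι → α) : P *ᵥ u ⬝ᵥ v = u ⬝ᵥ P *ᵥ v := by
  conv_lhs => rw [← hP.eq]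
  exact transpose_mulVec_dotProduct P u v

theorem IsSymm.dotProduct_mulVec_comm [CommSemiring α] {P : Matrix ι ι α} (hP : P.IsSymm)
    (u v : ι → α) : u ⬝ᵥ P *ᵥ v = v ⬝ᵥ P *ᵥ u := by
  rw [dotProduct_comm, hP.mulVec_dotProduct]

theorem IsSymm.dotProduct_transpose_mul_add_mul_mulVec [CommSemiring α] {P : Matrix ι ι α}
    (hP : P.IsSymm) (A : Matrix ι ι α) (u : ι → α) :
    u ⬝ᵥ (Aᵀ * P + P * A) *ᵥ u = 2 * (u ⬝ᵥ P *ᵥ (A *ᵥ u)) := by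
  rw [add_mulVec, dotProduct_add, ← mulVec_mulVec, ← mulVec_mulVec, dotProduct_transpose_mulVec,
    hP.mulVec_dotProduct, two_mul]

theorem IsSymm.transpose_mul_mulVec_dotProduct [CommSemiring α] {ν : Type*} [Fintype ν]
    {P : Matrix ι ι α} (hP : P.IsSymm) (B : Matrix ι ν α) (K : Matrix ν κ α) (u : ι → α)
    (x : κ → α) : (Bᵀ * P) *ᵥ u ⬝ᵥ K *ᵥ x = u ⬝ᵥ P *ᵥ ((B * K) *ᵥ x) := by
  rw [← mulVec_mulVec, transpose_mulVec_dotProduct, ← hP.mulVec_dotProduct, mulVec_mulVec]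

end Matrix

section Derivatives

variable {𝕜 : Type*} [NontriviallyNormedField 𝕜] {ι κ : Type*} [Fintype ι] [Fintype κ]

theorem HasDerivAt.dotProduct_mulVec {u : 𝕜 → ι → 𝕜} {M : 𝕜 → Matrix ι κ 𝕜}
    {w : 𝕜 → κ → 𝕜} {u' : ι → 𝕜} {M' : Matrix ι κ 𝕜} {w' : κ → 𝕜} {t : 𝕜}
    (hu : HasDerivAt u u' t) (hM : HasDerivAt M M' t) (hw : HasDerivAt w w' t) :
    HasDerivAt (fun s => u s ⬝ᵥ M s *ᵥ w s)
      (u' ⬝ᵥ M t *ᵥ w t + u t ⬝ᵥ M' *ᵥ w t + u t ⬝ᵥ M t *ᵥ w') t := by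
  have hu_i i : HasDerivAt (fun s => u s i) (u' i) t := hasDerivAt_pi.mp hu i
  have hw_j j : HasDerivAt (fun s => w s j) (w' j) t := hasDerivAt_pi.mp hw j
  have hM_ij i j : HasDerivAt (fun s => M s i j) (M' i j) t :=
    hasDerivAt_pi.mp (hasDerivAt_pi.mp hM i) j
  simp only [Matrix.dotProduct_mulVec_eq_sum, ← Finset.sum_add_distrib]
  refine (HasDerivAt.fun_sum fun i _ => HasDerivAt.fun_sum fun j _ =>
    ((hu_i i).fun_mul (hM_ij i j)).fun_mul (hw_j j)).congr_deriv ?_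
  exact Finset.sum_congr rfl fun i _ => Finset.sum_congr rfl fun j _ => by ring

end Derivatives

theorem HasDerivAt.frobSq {p q : ℕ} {K : ℝ → Matrix (Fin p) (Fin q) ℝ}
    {K' : Matrix (Fin p) (Fin q) ℝ} {t : ℝ} (hK : HasDerivAt K K' t) :
    HasDerivAt (fun s => frobSq (K s)) (2 * ∑ i, ∑ j, K t i j * K' i j) t := by
  have hK_ij i j : HasDerivAt (fun s => K s i j) (K' i j) t :=
    hasDerivAt_pi.mp (hasDerivAt_pi.mp hK i) j
  refine (HasDerivAt.fun_sum fun i _ => HasDerivAt.fun_sum fun j _ =>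
    (hK_ij i j).fun_pow 2).congr_deriv ?_
  norm_num [Finset.mul_sum, mul_assoc]

/-- adaptive Lyapunov identity. With `P(t)` symmetric, the time-varying
Lyapunov equation `A_clᵀP + PA_cl = −Q̄`, error dynamics `e' = A_cl e + BK̃x` and
adaptive law `K̃' = −μBᵀP e xᵀ`, the function `V = eᵀPe + μ⁻¹‖K̃‖_F²` is
differentiable with `V' = −eᵀ(Q̄ − P')e`. -/
theorem adaptive_lyapunov_identity {n m : ℕ}
    (B : Matrix (Fin n) (Fin m) ℝ) (μ : ℝ) (hμ : 0 < μ)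
    (P Pdot Acl Qbar : ℝ → Matrix (Fin n) (Fin n) ℝ)
    (hPderiv : ∀ t, HasDerivAt P (Pdot t) t)
    (hPsymm : ∀ t, (P t).IsSymm)
    (hLyap : ∀ t, (Acl t)ᵀ * P t + P t * Acl t = -(Qbar t))
    (x e : ℝ → Fin n → ℝ) (Ktil : ℝ → Matrix (Fin m) (Fin n) ℝ)
    (he : ∀ t, HasDerivAt e (Acl t *ᵥ e t + (B * Ktil t) *ᵥ x t) t)
    (hKtil : ∀ t, HasDerivAt Ktil
      (-μ • Matrix.vecMulVec ((Bᵀ * P t) *ᵥ e t) (x t)) t) :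
    ∀ t, HasDerivAt (fun s => e s ⬝ᵥ (P s) *ᵥ e s + μ⁻¹ * frobSq (Ktil s))
      (-(e t ⬝ᵥ (Qbar t - Pdot t) *ᵥ e t)) t := by
  intro t
  have hP := hPsymm t
  refine (((he t).dotProduct_mulVec (hPderiv t) (he t)).add
    ((hKtil t).frobSq.const_mul μ⁻¹)).congr_deriv ?_
  have hdissip : 2 * (e t ⬝ᵥ P t *ᵥ (Acl t *ᵥ e t)) = -(e t ⬝ᵥ Qbar t *ᵥ e t) := by
    rw [← hP.dotProduct_transpose_mul_add_mul_mulVec, hLyap, neg_mulVec, dotProduct_neg]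
  have hadapt : μ⁻¹ * (2 * ∑ i, ∑ j, Ktil t i j * (-μ • vecMulVec ((Bᵀ * P t) *ᵥ e t) (x t)) i j)
      = -2 * (e t ⬝ᵥ P t *ᵥ ((B * Ktil t) *ᵥ x t)) := by
    simp only [Matrix.smul_apply, smul_eq_mul, mul_left_comm _ (-μ), ← Finset.mul_sum,
      sum_mul_vecMulVec, hP.transpose_mul_mulVec_dotProduct]
    field_simp
  rw [hadapt, hP.dotProduct_mulVec_comm _ (e t), mulVec_add, dotProduct_add, sub_mulVec,
    dotProduct_sub]
  linarith
end
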